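/- Let $f,g\in L^1(0,T)$ with $g(t)>0$ for a.e. $t\in(0,T)$. If the convolution $(f*g)(t)=0$ for a.e. $t\in(0,T)$, then $f=0$ a.e. in $(0,T)$. -/

import Mathlib

/-!
Extend `f` and `g` by zero to `ℝ`. For `s ≥ 0` the Laplace transform `𝓛` turns convolution into
multiplication, and since `f * g` vanishes on `(0, T)`,
`|𝓛f(s)| |𝓛g(s)| ≤ e^{-sT} ‖f‖₁ ‖g‖₁`. Positivity of `g` gives `𝓛g(s) ≥ c_δ e^{-sδ}` with
`c_δ = ∫₀^δ g > 0`, so `𝓛f(s) = O(e^{-bs})` for every `b < T`, and the same holds for the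
restriction `h` of `f` to `(-∞, b)`. Then `e^{bz} 𝓛h(z)` is entire, bounded on the left
half-plane because `h` lives on `[0, b]`, and bounded on the right half-plane by
Phragmén–Lindelöf. By Liouville it is constant, and letting `z → -∞` along the real axis shows
that the constant is `0`. So the Fourier transform of `h` vanishes, and `h = 0` a.e.
-/

open Real MeasureTheory

section

open Complex Set Filter Function Topology Convolution ContinuousLinearMap

noncomputable def laplace (H : ℝ → ℝ) (s : ℝ) : ℝ := ∫ x, rexp (-s * x) * H x

noncomputable def complexLaplace (H : ℝ → ℝ) (z : ℂ) : ℂ := ∫ x : ℝ, cexp (-z * x) * H x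

theorem complexLaplace_ofReal (H : ℝ → ℝ) (s : ℝ) : complexLaplace H s = laplace H s := by
  rw [complexLaplace, laplace, ← integral_complex_ofReal]
  push_cast
  rfl

theorem integral_withDensity_ofReal {α : Type*} [MeasurableSpace α] {μ : Measure α}
    {u : α → ℝ} (hu : Integrable u μ) (φ : α → ℂ) :
    ∫ x, φ x ∂μ.withDensity (fun x => ENNReal.ofReal (u x)) = ∫ x, max (u x) 0 • φ x ∂μ := by
  rw [integral_withDensity_eq_integral_toReal_smul₀ hu.1.aemeasurable.ennreal_ofReal
    (Eventually.of_forall fun _ => ENNReal.ofReal_lt_top)]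
  simp only [ENNReal.toReal_ofReal']

/- The positive and negative parts of `H` are densities of two finite measures with the same
characteristic function. -/
theorem ae_eq_zero_of_integral_cexp_mul_I_eq_zero {H : ℝ → ℝ} (hH : Integrable H)
    (h : ∀ t : ℝ, ∫ x : ℝ, cexp (t * x * I) * H x = 0) : H =ᵐ[volume] 0 := by
  have := isFiniteMeasure_withDensity_ofReal hH.2
  have := isFiniteMeasure_withDensity_ofReal hH.neg.2
  have hchar : charFun (volume.withDensity fun x => ENNReal.ofReal (H x)) =
      charFun (volume.withDensity fun x => ENNReal.ofReal (-H x)) := by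
    ext t
    have hint (u : ℝ → ℝ) (hu : Integrable u) :
        Integrable (fun x : ℝ => max (u x) 0 • cexp (t * x * I)) :=
      hu.pos_part.smul_bdd (f := fun x : ℝ => cexp (t * x * I)) 1
        (Continuous.aestronglyMeasurable (by fun_prop))
        (Eventually.of_forall fun x => by rw [← ofReal_mul, norm_exp_ofReal_mul_I])
    rw [charFun_apply_real, charFun_apply_real, integral_withDensity_ofReal hH,
      integral_withDensity_ofReal (u := fun x => -H x) hH.neg, ← sub_eq_zero,
      ← integral_sub (hint H hH) (hint (fun x => -H x) hH.neg)]
    refine (integral_congr_ae (Eventually.of_forall fun x => ?_)).trans (h t)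
    rw [real_smul, real_smul, ← sub_mul, mul_comm, ← ofReal_sub,
      max_zero_sub_max_neg_zero_eq_self]
  have hdens := (withDensity_eq_iff hH.1.aemeasurable.ennreal_ofReal
    hH.neg.1.aemeasurable.ennreal_ofReal hH.lintegral_lt_top.ne).1 (Measure.ext_of_charFun hchar)
  filter_upwards [hdens] with x hx
  have : max (H x) 0 = max (-H x) 0 := by
    simpa only [ENNReal.toReal_ofReal', Pi.neg_apply] using congrArg ENNReal.toReal hx
  simp only [Pi.zero_apply]
  grind

theorem norm_integral_mul_le_of_support {α : Type*} [MeasurableSpace α] {μ : Measure α}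
    {H : α → ℝ} {φ : α → ℂ} {M : ℝ} (hH : Integrable H μ) (hφ : ∀ x ∈ support H, ‖φ x‖ ≤ M) :
    ‖∫ x, φ x * H x ∂μ‖ ≤ M * ∫ x, |H x| ∂μ := by
  rw [← integral_const_mul]
  refine (norm_integral_le_integral_norm _).trans <| integral_mono_of_nonneg
    (ae_of_all _ fun _ => norm_nonneg _) (hH.abs.const_mul M) (ae_of_all _ fun x => ?_)
  by_cases hx : H x = 0
  · simp [hx]
  · simpa only [norm_mul, norm_real, Real.norm_eq_abs] using
      mul_le_mul_of_nonneg_right (hφ x hx) (abs_nonneg (H x))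

theorem norm_cexp_mul_le {w : ℂ} {x R : ℝ} (hx : |x| ≤ R) : ‖cexp (w * x)‖ ≤ rexp (‖w‖ * R) := by
  rw [norm_exp, re_mul_ofReal, Real.exp_le_exp]
  calc w.re * x ≤ |w.re| * |x| := by rw [← abs_mul]; exact le_abs_self _
    _ ≤ ‖w‖ * R := mul_le_mul (abs_re_le_norm w) hx (abs_nonneg x) (norm_nonneg w)

theorem norm_cexp_mul_sub_le_one {z : ℂ} {b x : ℝ} (hz : z.re ≤ 0) (hx : x ≤ b) :
    ‖cexp (z * (b - x))‖ ≤ 1 := by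
  rw [← ofReal_sub, norm_exp, re_mul_ofReal, Real.exp_le_one_iff]
  exact mul_nonpos_of_nonpos_of_nonneg hz (sub_nonneg.2 hx)

theorem integrable_cexp_mul_mul {H : ℝ → ℝ} {a b : ℝ} (hH : Integrable H)
    (hsupp : support H ⊆ Icc a b) (w : ℂ) : Integrable (fun x : ℝ => cexp (w * x) * H x) := by
  refine (hH.norm.const_mul (rexp (‖w‖ * max |a| |b|))).mono' (by fun_prop)
    (ae_of_all _ fun x => ?_)
  by_cases hx : H x = 0
  · simp [hx]
  · rw [norm_mul, norm_real]
    exact mul_le_mul_of_nonneg_right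
      (norm_cexp_mul_le (abs_le_max_abs_abs (hsupp hx).1 (hsupp hx).2)) (norm_nonneg _)

theorem differentiable_complexLaplace {H : ℝ → ℝ} {a b : ℝ} (hH : Integrable H)
    (hsupp : support H ⊆ Icc a b) : Differentiable ℂ (complexLaplace H) := by
  intro z₀
  set R := max |a| |b|
  have hderiv (z : ℂ) (x : ℝ) : HasDerivAt (fun w : ℂ => cexp (-w * x) * H x)
      (-x * cexp (-z * x) * H x) z := by
    simpa [mul_comm] using (((hasDerivAt_id z).neg.mul_const (x : ℂ)).cexp).mul_const (H x : ℂ)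
  refine (hasDerivAt_integral_of_dominated_loc_of_deriv_le (Metric.ball_mem_nhds z₀ one_pos)
    (bound := fun x => R * rexp ((‖z₀‖ + 1) * R) * |H x|)
    (Eventually.of_forall fun z => (integrable_cexp_mul_mul hH hsupp (-z)).1)
    (integrable_cexp_mul_mul hH hsupp (-z₀)) (by fun_prop) ?_ (hH.abs.const_mul _)
    (ae_of_all _ fun x z _ => hderiv z x)).2.differentiableAt
  refine ae_of_all _ fun x z hz => ?_
  by_cases hx : H x = 0
  · simp [hx]
  have hxR : |x| ≤ R := abs_le_max_abs_abs (hsupp hx).1 (hsupp hx).2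
  have hz : ‖-z‖ ≤ ‖z₀‖ + 1 := by
    rw [norm_neg]; linarith [norm_le_norm_add_norm_sub' z z₀, mem_ball_iff_norm.1 hz]
  have hR : 0 ≤ R := (abs_nonneg x).trans hxR
  rw [norm_mul, norm_mul, norm_neg, norm_real, norm_real, Real.norm_eq_abs, Real.norm_eq_abs]
  gcongr
  exact (norm_cexp_mul_le hxR).trans (Real.exp_le_exp.2 (by gcongr))

theorem cexp_mul_complexLaplace (H : ℝ → ℝ) (b : ℝ) (z : ℂ) :
    cexp (b * z) * complexLaplace H z = ∫ x : ℝ, cexp (z * (b - x)) * H x := by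
  rw [complexLaplace, ← integral_const_mul]
  refine integral_congr_ae (ae_of_all _ fun x => ?_)
  dsimp only
  rw [← mul_assoc, ← Complex.exp_add]
  ring_nf

theorem norm_cexp_mul_complexLaplace_le_exp {H : ℝ → ℝ} {b : ℝ} (hH : Integrable H)
    (hsupp : support H ⊆ Icc 0 b) (z : ℂ) :
    ‖cexp (b * z) * complexLaplace H z‖ ≤ rexp (‖z‖ * b) * ∫ x, |H x| := by
  rw [cexp_mul_complexLaplace]
  refine norm_integral_mul_le_of_support hH fun x hx => ?_
  have hx := hsupp hx
  rw [← ofReal_sub]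
  exact norm_cexp_mul_le (abs_le.2 ⟨by linarith [hx.1, hx.2], by linarith [hx.1]⟩)

theorem norm_cexp_mul_complexLaplace_le {H : ℝ → ℝ} {b C : ℝ} (hH : Integrable H)
    (hsupp : support H ⊆ Icc 0 b)
    (hdecay : ∀ s : ℝ, 0 ≤ s → ‖complexLaplace H s‖ ≤ C * rexp (-(b * s))) (z : ℂ) :
    ‖cexp (b * z) * complexLaplace H z‖ ≤ ∫ x, |H x| := by
  have hleft {z : ℂ} (hz : z.re ≤ 0) : ‖cexp (b * z) * complexLaplace H z‖ ≤ ∫ x, |H x| := by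
    rw [cexp_mul_complexLaplace]
    simpa using norm_integral_mul_le_of_support hH fun x hx =>
      norm_cexp_mul_sub_le_one hz (hsupp hx).2
  rcases le_total z.re 0 with hz | hz
  · exact hleft hz
  refine PhragmenLindelof.right_half_plane_of_bounded_on_real
    (f := fun z => cexp (b * z) * complexLaplace H z) ?_ ?_ ?_ (fun y => hleft (by simp)) hz
  · exact ((by fun_prop : Differentiable ℂ fun z : ℂ => cexp (b * z)).mul
      (differentiable_complexLaplace hH hsupp)).diffContOnCl
  · refine ⟨1, one_lt_two, b, Asymptotics.IsBigO.of_bound (∫ x, |H x|)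
      (Eventually.of_forall fun z => ?_)⟩
    rw [rpow_one, Real.norm_of_nonneg (Real.exp_pos _).le, mul_comm (∫ x, |H x|), mul_comm b]
    exact norm_cexp_mul_complexLaplace_le_exp hH hsupp z
  · refine isBoundedUnder_of_eventually_le (a := C) ?_
    filter_upwards [eventually_ge_atTop 0] with s hs
    rw [norm_mul, ← ofReal_mul, norm_exp_ofReal]
    calc rexp (b * s) * ‖complexLaplace H s‖ ≤ rexp (b * s) * (C * rexp (-(b * s))) := by
          gcongr; exact hdecay s hs
      _ = C := by rw [mul_left_comm, ← Real.exp_add, add_neg_cancel, Real.exp_zero, mul_one]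

theorem tendsto_cexp_mul_complexLaplace_neg_atTop {H : ℝ → ℝ} {b : ℝ} (hH : Integrable H)
    (hsupp : support H ⊆ Iic b) :
    Tendsto (fun s : ℝ => cexp (b * -s) * complexLaplace H (-s)) atTop (𝓝 0) := by
  simp_rw [cexp_mul_complexLaplace]
  rw [← integral_zero ℝ ℂ]
  refine tendsto_integral_filter_of_dominated_convergence (fun x => |H x|)
    (Eventually.of_forall fun s => by fun_prop) ?_ hH.abs ?_
  · filter_upwards [eventually_ge_atTop 0] with s hs
    refine ae_of_all _ fun x => ?_
    by_cases hx : H x = 0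
    · simp [hx]
    rw [norm_mul, norm_real, Real.norm_eq_abs]
    exact mul_le_of_le_one_left (abs_nonneg _)
      (norm_cexp_mul_sub_le_one (by simpa using hs) (hsupp hx))
  · filter_upwards [Measure.ae_ne volume b] with x hxb
    by_cases hx : H x = 0
    · simp [hx]
    have hpos : 0 < b - x := sub_pos.2 (lt_of_le_of_ne (hsupp hx) hxb)
    rw [tendsto_zero_iff_norm_tendsto_zero]
    simp_rw [norm_mul, norm_real, ← ofReal_neg, ← ofReal_sub, ← ofReal_mul, norm_exp_ofReal]
    simpa using (tendsto_exp_neg_atTop_nhds_zero.comp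
      (tendsto_id.atTop_mul_const hpos)).mul_const ‖H x‖

theorem ae_eq_zero_of_laplace_decay {H : ℝ → ℝ} {b C : ℝ} (hH : Integrable H)
    (hsupp : support H ⊆ Icc 0 b) (hdecay : ∀ s : ℝ, 0 ≤ s → |laplace H s| ≤ C * rexp (-(b * s))) :
    H =ᵐ[volume] 0 := by
  have hdecay' (s : ℝ) (hs : 0 ≤ s) : ‖complexLaplace H s‖ ≤ C * rexp (-(b * s)) := by
    rw [complexLaplace_ofReal, norm_real, Real.norm_eq_abs]
    exact hdecay s hs
  have hdiff : Differentiable ℂ fun z => cexp (b * z) * complexLaplace H z :=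
    (by fun_prop : Differentiable ℂ fun z : ℂ => cexp (b * z)).mul
      (differentiable_complexLaplace hH hsupp)
  have hbdd : Bornology.IsBounded (range fun z => cexp (b * z) * complexLaplace H z) :=
    isBounded_iff_forall_norm_le.2 ⟨_, forall_mem_range.2
      (norm_cexp_mul_complexLaplace_le hH hsupp hdecay')⟩
  have hzero (z : ℂ) : cexp (b * z) * complexLaplace H z = 0 :=
    tendsto_nhds_unique tendsto_const_nhds <|
      (tendsto_cexp_mul_complexLaplace_neg_atTop hH (hsupp.trans Icc_subset_Iic_self)).congr
        fun s => hdiff.apply_eq_apply_of_bounded hbdd _ z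
  refine ae_eq_zero_of_integral_cexp_mul_I_eq_zero hH fun t => ?_
  have := (mul_eq_zero.1 (hzero (-(t * I)))).resolve_left (Complex.exp_ne_zero _)
  simpa [complexLaplace, mul_right_comm _ I] using this

theorem integrable_exp_neg_mul_mul {H : ℝ → ℝ} (hH : Integrable H) (hsupp : support H ⊆ Ici 0)
    {s : ℝ} (hs : 0 ≤ s) : Integrable fun x => rexp (-s * x) * H x := by
  refine hH.norm.mono' (by fun_prop) (ae_of_all _ fun x => ?_)
  by_cases hx : H x = 0
  · simp [hx]
  rw [norm_mul, Real.norm_of_nonneg (Real.exp_pos _).le]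
  exact mul_le_of_le_one_left (norm_nonneg _)
    (Real.exp_le_one_iff.2 (by nlinarith [mem_Ici.1 (hsupp hx)]))

theorem abs_setIntegral_Ici_exp_neg_mul_le {H : ℝ → ℝ} (hH : Integrable H)
    (hsupp : support H ⊆ Ici 0) {s : ℝ} (hs : 0 ≤ s) (b : ℝ) :
    |∫ x in Ici b, rexp (-s * x) * H x| ≤ rexp (-(b * s)) * ∫ x, |H x| := by
  calc |∫ x in Ici b, rexp (-s * x) * H x| ≤ ∫ x in Ici b, |rexp (-s * x) * H x| :=
        abs_integral_le_integral_abs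
    _ ≤ ∫ x in Ici b, rexp (-(b * s)) * |H x| := by
        refine setIntegral_mono_on (integrable_exp_neg_mul_mul hH hsupp hs).abs.integrableOn
          (hH.abs.const_mul _).integrableOn measurableSet_Ici fun x hx => ?_
        rw [abs_mul, abs_exp]
        gcongr
        nlinarith [mem_Ici.1 hx]
    _ ≤ ∫ x, rexp (-(b * s)) * |H x| :=
        setIntegral_le_integral (hH.abs.const_mul _) (ae_of_all _ fun x => by positivity)
    _ = rexp (-(b * s)) * ∫ x, |H x| := integral_const_mul _ _

theorem ae_restrict_Iio_eq_zero_of_laplace_decay {H : ℝ → ℝ} {b C : ℝ} (hH : Integrable H)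
    (hsupp : support H ⊆ Ici 0) (hdecay : ∀ s : ℝ, 0 ≤ s → |laplace H s| ≤ C * rexp (-(b * s))) :
    ∀ᵐ x ∂volume.restrict (Iio b), H x = 0 := by
  have hHb : (Iio b).indicator H =ᵐ[volume] 0 := by
    refine ae_eq_zero_of_laplace_decay (b := b) (C := C + ∫ x, |H x|)
      (hH.indicator measurableSet_Iio) (fun x hx => ?_) fun s hs => ?_
    · rw [support_indicator] at hx
      exact ⟨hsupp hx.2, hx.1.le⟩
    have hsplit := integral_add_compl (measurableSet_Iio (a := b))
      (integrable_exp_neg_mul_mul hH hsupp hs)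
    rw [compl_Iio] at hsplit
    have hind : laplace ((Iio b).indicator H) s = ∫ x in Iio b, rexp (-s * x) * H x := by
      rw [laplace, ← integral_indicator measurableSet_Iio]
      exact integral_congr_ae (ae_of_all _ fun x =>
        (indicator_mul_right _ (fun x => rexp (-s * x)) H).symm)
    rw [hind, eq_sub_of_add_eq hsplit, add_mul]
    exact (abs_sub _ _).trans (add_le_add (hdecay s hs)
      ((abs_setIntegral_Ici_exp_neg_mul_le hH hsupp hs b).trans_eq (mul_comm _ _)))
  rw [ae_restrict_iff' measurableSet_Iio]
  filter_upwards [hHb] with x hx hxb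
  simpa [indicator_of_mem hxb] using hx

theorem convolution_eq_zero_of_neg {F G : ℝ → ℝ} (hF : support F ⊆ Ici 0)
    (hG : support G ⊆ Ici 0) {t : ℝ} (ht : t < 0) : (F ⋆ G) t = 0 := by
  rw [convolution_lsmul]
  refine integral_eq_zero_of_ae (ae_of_all _ fun τ => ?_)
  by_cases hτ : F τ = 0
  · simp [hτ]
  have hG0 : G (t - τ) = 0 :=
    notMem_support.1 fun h => by linarith [mem_Ici.1 (hG h), mem_Ici.1 (hF hτ)]
  simp [hG0]

theorem exp_neg_mul_mul_convolution (F G : ℝ → ℝ) (s t : ℝ) :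
    rexp (-s * t) * (F ⋆ G) t =
      ((fun x => rexp (-s * x) * F x) ⋆ (fun x => rexp (-s * x) * G x)) t := by
  simp only [convolution_lsmul, smul_eq_mul, ← integral_const_mul]
  refine integral_congr_ae (ae_of_all _ fun τ => ?_)
  have : rexp (-s * t) = rexp (-s * τ) * rexp (-s * (t - τ)) := by
    rw [← Real.exp_add]; ring_nf
  dsimp only
  rw [this]
  ring

theorem abs_laplace_mul_abs_laplace_le {F G : ℝ → ℝ} {T s : ℝ} (hF : Integrable F)
    (hG : Integrable G) (hFs : support F ⊆ Ici 0) (hGs : support G ⊆ Ici 0)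
    (hconv : ∀ᵐ t ∂volume.restrict (Ioo 0 T), (F ⋆ G) t = 0) (hs : 0 ≤ s) :
    |laplace F s| * |laplace G s| ≤ rexp (-(T * s)) * ((∫ x, |F x|) * ∫ x, |G x|) := by
  have hprod : laplace F s * laplace G s = ∫ t, rexp (-s * t) * (F ⋆ G) t := by
    simp_rw [laplace, exp_neg_mul_mul_convolution]
    exact (integral_convolution (lsmul ℝ ℝ) (integrable_exp_neg_mul_mul hF hFs hs)
      (integrable_exp_neg_mul_mul hG hGs hs)).symm
  have hK : ∫ t, ((fun x => |F x|) ⋆ (fun x => |G x|)) t = (∫ x, |F x|) * ∫ x, |G x| :=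
    integral_convolution (lsmul ℝ ℝ) hF.abs hG.abs
  have hK_nonneg (t : ℝ) : 0 ≤ ((fun x => |F x|) ⋆ (fun x => |G x|)) t :=
    integral_nonneg fun τ => mul_nonneg (abs_nonneg _) (abs_nonneg _)
  have hpt : ∀ᵐ t, |rexp (-s * t) * (F ⋆ G) t| ≤
      rexp (-(T * s)) * ((fun x => |F x|) ⋆ (fun x => |G x|)) t := by
    filter_upwards [(ae_restrict_iff' measurableSet_Ioo).1 hconv, Measure.ae_ne volume 0]
      with t hconv_t ht0
    rcases lt_or_gt_of_ne ht0 with htneg | htpos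
    · rw [convolution_eq_zero_of_neg hFs hGs htneg, mul_zero, abs_zero]
      exact mul_nonneg (Real.exp_pos _).le (hK_nonneg t)
    rcases lt_or_ge t T with htT | htT
    · rw [hconv_t ⟨htpos, htT⟩, mul_zero, abs_zero]
      exact mul_nonneg (Real.exp_pos _).le (hK_nonneg t)
    rw [abs_mul, abs_exp]
    refine mul_le_mul (Real.exp_le_exp.2 (by nlinarith)) ?_ (abs_nonneg _) (Real.exp_pos _).le
    simp only [convolution_lsmul, smul_eq_mul, ← abs_mul]
    exact abs_integral_le_integral_abs
  calc |laplace F s| * |laplace G s| = |∫ t, rexp (-s * t) * (F ⋆ G) t| := by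
        rw [← abs_mul, hprod]
    _ ≤ ∫ t, |rexp (-s * t) * (F ⋆ G) t| := abs_integral_le_integral_abs
    _ ≤ ∫ t, rexp (-(T * s)) * ((fun x => |F x|) ⋆ (fun x => |G x|)) t :=
        integral_mono_of_nonneg (ae_of_all _ fun _ => abs_nonneg _)
          ((hF.abs.integrable_convolution (lsmul ℝ ℝ) hG.abs).const_mul _) hpt
    _ = rexp (-(T * s)) * ((∫ x, |F x|) * ∫ x, |G x|) := by rw [integral_const_mul, hK]

theorem integral_pos_of_ae_pos {α : Type*} [MeasurableSpace α] {μ : Measure α} [NeZero μ]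
    {f : α → ℝ} (hf : Integrable f μ) (hpos : ∀ᵐ x ∂μ, 0 < f x) : 0 < ∫ x, f x ∂μ := by
  rw [integral_pos_iff_support_of_nonneg_ae (hpos.mono fun _ h => h.le) hf,
    measure_congr (show support f =ᵐ[μ] univ from eventuallyEq_univ.2 (hpos.mono fun _ h => h.ne'))]
  exact Measure.measure_univ_pos.2 (NeZero.ne μ)

theorem exp_neg_mul_mul_setIntegral_Ioo_le_laplace {G : ℝ → ℝ} (hG : Integrable G)
    (hGs : support G ⊆ Ici 0) (hG0 : 0 ≤ᵐ[volume] G) {s : ℝ} (hs : 0 ≤ s) (δ : ℝ) :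
    rexp (-(δ * s)) * ∫ x in Ioo 0 δ, G x ≤ laplace G s := by
  have hint := integrable_exp_neg_mul_mul hG hGs hs
  rw [laplace, ← integral_const_mul]
  calc ∫ x in Ioo 0 δ, rexp (-(δ * s)) * G x ≤ ∫ x in Ioo 0 δ, rexp (-s * x) * G x := by
        refine integral_mono_ae (hG.integrableOn.const_mul _) hint.integrableOn ?_
        filter_upwards [ae_restrict_mem measurableSet_Ioo, ae_restrict_of_ae hG0] with x hx hGx
        exact mul_le_mul_of_nonneg_right (Real.exp_le_exp.2 (by nlinarith [hx.2])) hGx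
    _ ≤ ∫ x, rexp (-s * x) * G x :=
        setIntegral_le_integral hint (hG0.mono fun x hx => mul_nonneg (Real.exp_pos _).le hx)

theorem laplace_decay_of_convolution_eq_zero {F G : ℝ → ℝ} {T b : ℝ} (hF : Integrable F)
    (hG : Integrable G) (hFs : support F ⊆ Ici 0) (hGs : support G ⊆ Ici 0)
    (hG0 : 0 ≤ᵐ[volume] G) (hGpos : ∀ᵐ x ∂volume.restrict (Ioo 0 (T - b)), 0 < G x)
    (hconv : ∀ᵐ t ∂volume.restrict (Ioo 0 T), (F ⋆ G) t = 0) (hb : b < T) :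
    ∃ C, ∀ s : ℝ, 0 ≤ s → |laplace F s| ≤ C * rexp (-(b * s)) := by
  have : NeZero (volume.restrict (Ioo 0 (T - b))) :=
    ⟨by simp [Measure.restrict_eq_zero, hb]⟩
  have hc : 0 < ∫ x in Ioo 0 (T - b), G x := integral_pos_of_ae_pos hG.integrableOn hGpos
  refine ⟨(∫ x, |F x|) * (∫ x, |G x|) / ∫ x in Ioo 0 (T - b), G x, fun s hs => ?_⟩
  have hlow : 0 < rexp (-((T - b) * s)) * ∫ x in Ioo 0 (T - b), G x := by positivity
  have hsplit : rexp (-(T * s)) = rexp (-(b * s)) * rexp (-((T - b) * s)) := by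
    rw [← Real.exp_add]; ring_nf
  refine le_of_mul_le_mul_right ?_ hlow
  calc |laplace F s| * (rexp (-((T - b) * s)) * ∫ x in Ioo 0 (T - b), G x)
      ≤ |laplace F s| * |laplace G s| :=
        mul_le_mul_of_nonneg_left
          ((exp_neg_mul_mul_setIntegral_Ioo_le_laplace hG hGs hG0 hs _).trans (le_abs_self _))
          (abs_nonneg _)
    _ ≤ rexp (-(T * s)) * ((∫ x, |F x|) * ∫ x, |G x|) :=
        abs_laplace_mul_abs_laplace_le hF hG hFs hGs hconv hs
    _ = _ := by rw [hsplit]; field_simp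

theorem ae_restrict_Iio_of_forall_lt {μ : Measure ℝ} {p : ℝ → Prop} {a T : ℝ} (haT : a < T)
    (h : ∀ b ∈ Ioo a T, ∀ᵐ x ∂μ.restrict (Iio b), p x) : ∀ᵐ x ∂μ.restrict (Iio T), p x := by
  obtain ⟨u, hu_mono, hu_mem, hu_lim⟩ := exists_seq_strictMono_tendsto' haT
  rw [← (isLUB_of_tendsto_atTop hu_mono.monotone hu_lim).iUnion_Iio_eq, ae_restrict_iUnion_iff]
  exact fun n => h _ (hu_mem n)

theorem ae_restrict_Iio_eq_zero_of_convolution_eq_zero {F G : ℝ → ℝ} {T : ℝ} (hT : 0 < T)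
    (hF : Integrable F) (hG : Integrable G) (hFs : support F ⊆ Ici 0) (hGs : support G ⊆ Ici 0)
    (hG0 : 0 ≤ᵐ[volume] G) (hGpos : ∀ᵐ x ∂volume.restrict (Ioo 0 T), 0 < G x)
    (hconv : ∀ᵐ t ∂volume.restrict (Ioo 0 T), (F ⋆ G) t = 0) :
    ∀ᵐ x ∂volume.restrict (Iio T), F x = 0 := by
  refine ae_restrict_Iio_of_forall_lt hT fun b hb => ?_
  obtain ⟨C, hC⟩ := laplace_decay_of_convolution_eq_zero hF hG hFs hGs hG0
    (ae_restrict_of_ae_restrict_of_subset (Ioo_subset_Ioo_right (by linarith [hb.1])) hGpos)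
    hconv hb.2
  exact ae_restrict_Iio_eq_zero_of_laplace_decay hF hFs hC

theorem indicator_convolution_indicator (f g : ℝ → ℝ) {T t : ℝ} (ht : t ∈ Ioo 0 T) :
    ((Ioo 0 T).indicator f ⋆ (Ioo 0 T).indicator g) t = ∫ τ in Ioo 0 t, f (t - τ) * g τ := by
  rw [convolution_lsmul_swap, ← integral_indicator measurableSet_Ioo]
  refine integral_congr_ae (ae_of_all _ fun τ => ?_)
  dsimp only
  by_cases hτ : τ ∈ Ioo 0 t
  · have hτT : τ ∈ Ioo 0 T := ⟨hτ.1, hτ.2.trans ht.2⟩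
    have htτ : t - τ ∈ Ioo 0 T := ⟨by linarith [hτ.2], by linarith [hτ.1, ht.2]⟩
    rw [indicator_of_mem hτ, indicator_of_mem hτT, indicator_of_mem htτ, smul_eq_mul]
  rw [indicator_of_notMem hτ]
  rcases le_or_gt τ 0 with hτ0 | hτ0
  · have hτT : τ ∉ Ioo 0 T := fun h => by linarith [h.1]
    rw [indicator_of_notMem hτT, smul_zero]
  · have htτ : t - τ ∉ Ioo 0 T := fun h => hτ ⟨hτ0, by linarith [h.1]⟩
    rw [indicator_of_notMem htτ, zero_smul]

end

theorem stmt10 (T : ℝ) (hT : 0 < T) (f g : ℝ → ℝ)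
    (hf : IntegrableOn f (Set.Ioo 0 T)) (hg : IntegrableOn g (Set.Ioo 0 T))
    (hgpos : ∀ᵐ t ∂(volume.restrict (Set.Ioo 0 T)), 0 < g t)
    (hconv : ∀ᵐ t ∂(volume.restrict (Set.Ioo 0 T)),
      (∫ τ in Set.Ioo 0 t, f (t - τ) * g τ) = 0) :
    ∀ᵐ t ∂(volume.restrict (Set.Ioo 0 T)), f t = 0 := by
  open Set Function in
  have hsupp (h : ℝ → ℝ) : support ((Ioo 0 T).indicator h) ⊆ Ici 0 :=
    support_indicator_subset.trans (Ioo_subset_Ioi_self.trans Ioi_subset_Ici_self)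
  open Set in
  have hF0 := ae_restrict_Iio_eq_zero_of_convolution_eq_zero hT
    ((integrable_indicator_iff measurableSet_Ioo).2 hf)
    ((integrable_indicator_iff measurableSet_Ioo).2 hg) (hsupp f) (hsupp g)
    (by
      filter_upwards [(ae_restrict_iff' measurableSet_Ioo).1 hgpos] with x hx
      exact indicator_apply_nonneg fun hmem => (hx hmem).le)
    (by
      filter_upwards [hgpos, ae_restrict_mem measurableSet_Ioo] with x hx hmem
      rwa [indicator_of_mem hmem])
    (by
      filter_upwards [hconv, ae_restrict_mem measurableSet_Ioo] with t ht hmem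
      rwa [indicator_convolution_indicator f g hmem])
  filter_upwards [ae_restrict_of_ae_restrict_of_subset Set.Ioo_subset_Iio_self hF0,
    ae_restrict_mem measurableSet_Ioo] with x hx hmem
  rwa [Set.indicator_of_mem hmem] at hx
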